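/- Let X = Spec k[ℳ] be a seminormal and S_2 toric variety which is not normal, with non-normal locus C. Define the core of X as the intersection of the irreducible components of C. Then the core is a normal toric variety; combinatorially, if σ(Δ) = ⋂_{X_{τ_i} ⊆ C} τ_i (intersection over codimension-one cones τ_i of Δ whose subvarieties lie in C), then S_{σ(Δ)} = Λ ∩ σ(Δ) where Λ = S_{σ(Δ)} - S_{σ(Δ)}. -/

import Mathlib

open scoped BigOperators

/-- The convex cone generated by a set `s` in a real vector space. -/
def coneOf {V : Type} [AddCommGroup V] [Module ℝ V] (s : Set V) : Set V :=
  {x | ∃ (n : ℕ) (c : Fin n → ℝ) (v : Fin n → V),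
    (∀ i, 0 ≤ c i) ∧ (∀ i, v i ∈ s) ∧ x = ∑ i, c i • v i}

/-- `τ` is a face of the cone `σ`. -/
def IsFaceOf {V : Type} [AddCommGroup V] [Module ℝ V] (τ σ : Set V) : Prop :=
  τ ⊆ σ ∧ (0 : V) ∈ τ ∧ (∀ x ∈ τ, ∀ y ∈ τ, x + y ∈ τ) ∧
    (∀ x ∈ τ, ∀ c : ℝ, 0 ≤ c → c • x ∈ τ) ∧
    ∀ x ∈ σ, ∀ y ∈ σ, x + y ∈ τ → x ∈ τ ∧ y ∈ τ

/-- The dimension of the linear span of a set. -/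
noncomputable def coneDim {V : Type} [AddCommGroup V] [Module ℝ V] (s : Set V) : ℕ :=
  Module.finrank ℝ (Submodule.span ℝ s)

/-- `τ` is a codimension-one face of the cone `σ`. -/
def IsCodimOneFace {V : Type} [AddCommGroup V] [Module ℝ V] (τ σ : Set V) : Prop :=
  IsFaceOf τ σ ∧ coneDim τ + 1 = coneDim σ

/-- `M` is a (full) lattice in the real vector space `V`. -/
def IsLattice {V : Type} [AddCommGroup V] [Module ℝ V] (M : AddSubgroup V) : Prop :=
  ∃ (n : ℕ) (b : Fin n → V), LinearIndependent ℝ b ∧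
    Submodule.span ℝ (Set.range b) = ⊤ ∧ M = AddSubgroup.closure (Set.range b)

/-- The group of differences `A - A` of a set `A`. -/
def latticeOf {V : Type} [AddCommGroup V] (A : Set V) : Set V :=
  {x | ∃ a ∈ A, ∃ b ∈ A, x = a - b}

/-- The group of differences `(A ∩ σ) - (A ∩ σ)`. -/
def diffSet {V : Type} [AddCommGroup V] (A σ : Set V) : Set V :=
  {x | ∃ a ∈ A ∩ σ, ∃ b ∈ A ∩ σ, x = a - b}

/-- A monoidal complex `ℳ = (M, Δ, (S_σ)_{σ ∈ Δ})`: a fan `Δ` of polyhedral cones in the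
real vector space `V` together with compatible finitely generated semigroups
`S_σ ⊆ M ∩ σ` generating the cones. -/
structure MonoidalComplex (V : Type) [AddCommGroup V] [Module ℝ V] (M : AddSubgroup V) where
  cones : Set (Set V)
  sg : Set V → Set V
  cones_finite : cones.Finite
  face_mem : ∀ σ ∈ cones, ∀ τ : Set V, IsFaceOf τ σ → τ ∈ cones
  inter_face : ∀ σ ∈ cones, ∀ σ' ∈ cones, IsFaceOf (σ ∩ σ') σ
  sg_sub : ∀ σ ∈ cones, sg σ ⊆ (M : Set V) ∩ σ
  sg_zero : ∀ σ ∈ cones, (0 : V) ∈ sg σ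
  sg_add : ∀ σ ∈ cones, ∀ x ∈ sg σ, ∀ y ∈ sg σ, x + y ∈ sg σ
  sg_face : ∀ σ ∈ cones, ∀ τ : Set V, IsFaceOf τ σ → sg τ = sg σ ∩ τ
  sg_gen : ∀ σ ∈ cones, coneOf (sg σ) = σ
  sg_fg : ∀ σ ∈ cones, ∃ t : Finset V, (↑t : Set V) ⊆ sg σ ∧
    sg σ ⊆ (AddSubmonoid.closure (↑t : Set V) : Set V)

namespace MonoidalComplex

variable {V : Type} [AddCommGroup V] [Module ℝ V] {M : AddSubgroup V}

/-- A facet is a maximal cone of the fan. -/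
def IsFacet (𝓜 : MonoidalComplex V M) (F : Set V) : Prop :=
  F ∈ 𝓜.cones ∧ ∀ σ ∈ 𝓜.cones, F ⊆ σ → σ = F

/-- A cone of `Δ` of codimension one. -/
def IsCodimOneCone (𝓜 : MonoidalComplex V M) (τ : Set V) : Prop :=
  τ ∈ 𝓜.cones ∧ ∃ F, 𝓜.IsFacet F ∧ IsCodimOneFace τ F

/-- The fan of `𝓜` is 1-connected: any two distinct facets `F ≠ F'` are joined by a chain of
facets containing `F ∩ F'`, consecutive members meeting in a common codimension-one face. -/
def OneConnected (𝓜 : MonoidalComplex V M) : Prop :=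
  ∀ F F' : Set V, 𝓜.IsFacet F → 𝓜.IsFacet F' → F ≠ F' →
    ∃ (n : ℕ) (c : ℕ → Set V), c 0 = F ∧ c n = F' ∧
      (∀ i ≤ n, 𝓜.IsFacet (c i) ∧ F ∩ F' ⊆ c i) ∧
      ∀ i < n, IsCodimOneFace (c i ∩ c (i + 1)) (c i) ∧
        IsCodimOneFace (c i ∩ c (i + 1)) (c (i + 1))

/-- `X = Spec k[ℳ]` satisfies Serre's condition `S_2`: every collection of functions on the
irreducible components which is regular in codimension one and compatible along the
invariant codimension-one subvarieties is the restriction of a global regular function. -/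
def IsS2 (k : Type) [Field k] (𝓜 : MonoidalComplex V M) : Prop :=
  ∀ f : Set V → (V →₀ k),
    (∀ F, 𝓜.IsFacet F → ∀ m, f F m ≠ 0 → ∃ s ∈ 𝓜.sg F, ∃ t ∈ 𝓜.sg F, m = s - t) →
    (∀ τ, 𝓜.IsCodimOneCone τ → ∀ F, 𝓜.IsFacet F → τ ⊆ F →
      ∀ m, f F m ≠ 0 → ∃ s ∈ 𝓜.sg F, ∃ t ∈ 𝓜.sg τ, m = s - t) →
    (∀ τ, 𝓜.IsCodimOneCone τ → ∀ F F', 𝓜.IsFacet F → 𝓜.IsFacet F' → τ ⊆ F → τ ⊆ F' →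
      ∀ m, (∃ s ∈ 𝓜.sg τ, ∃ t ∈ 𝓜.sg τ, m = s - t) → f F m = f F' m) →
    ∃ g : V →₀ k, (∀ m, g m ≠ 0 → ∃ σ ∈ 𝓜.cones, m ∈ 𝓜.sg σ) ∧
      ∀ F, 𝓜.IsFacet F → ∀ m : V, (m ∈ 𝓜.sg F → f F m = g m) ∧ (m ∉ 𝓜.sg F → f F m = 0)

end MonoidalComplex

namespace MonoidalComplex

variable {V : Type} [AddCommGroup V] [Module ℝ V] {M : AddSubgroup V}

/-- `X_σ` lies in the non-normal locus of `X = Spec k[ℳ]`: either `σ` lies in at least two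
facets, or it lies in a unique facet `F` and `S_σ - S_σ` is strictly smaller than the
corresponding lattice of the normalization `Spec k[(S_F - S_F) ∩ F]`. -/
def NonNormalCone (𝓜 : MonoidalComplex V M) (σ : Set V) : Prop :=
  σ ∈ 𝓜.cones ∧
    ((∃ F F', 𝓜.IsFacet F ∧ 𝓜.IsFacet F' ∧ F ≠ F' ∧ σ ⊆ F ∧ σ ⊆ F') ∨
     (∃ F, 𝓜.IsFacet F ∧ σ ⊆ F ∧
        latticeOf (𝓜.sg σ) ⊂ latticeOf (latticeOf (𝓜.sg F) ∩ σ)))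

end MonoidalComplex

/-!
Seminormality puts a point of `(S_F - S_F) ∩ F` into `S_F` as soon as it lies in the group of a
face of `F` and in the relative interior of that face. Along a normal codimension-one cone `τ`
(one facet `F`, and `(S_F - S_F) ∩ τ` inside `S_τ - S_τ`) this gives
`(S_F - S_F) ∩ F ⊆ S_F - S_τ`: adding to `m` a multiple of a relative-interior point of `S_τ` moves
it into the relative interior of `τ` if `m` lies in the span of `τ`, and into that of `F`
otherwise. So the `S_2` gluing condition for a monomial `χ^m` only has to be checked along the
non-normal codimension-one cones, and for `m ∈ (S_σ - S_σ) ∩ σ` with `σ = σ(Δ)` it holds there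
because `σ` lies in each of them. `S_2` also forces connectedness in codimension one, which
produces non-normal codimension-one cones and puts `σ(Δ)` inside every facet.
-/

lemma coneOf_eq_hull {V : Type} [AddCommGroup V] [Module ℝ V] (s : Set V) :
    coneOf s = PointedCone.hull ℝ s := by
  ext x
  rw [SetLike.mem_coe, Submodule.mem_span_set']
  constructor
  · rintro ⟨n, c, v, hc, hv, rfl⟩
    exact ⟨n, fun i => ⟨c i, hc i⟩, fun i => ⟨v i, hv i⟩, rfl⟩
  · rintro ⟨n, c, v, rfl⟩
    exact ⟨n, fun i => c i, fun i => v i, fun i => (c i).2, fun i => (v i).2, rfl⟩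

lemma isFaceOf_pointedCone_self {V : Type} [AddCommGroup V] [Module ℝ V]
    (C : PointedCone ℝ V) : IsFaceOf (C : Set V) C :=
  ⟨subset_rfl, C.zero_mem, fun _ hx _ hy => C.add_mem hx hy, fun _ hx _ hc => C.smul_mem hc hx,
    fun _ hx _ hy _ => ⟨hx, hy⟩⟩

lemma span_insert_eq_of_isCodimOneFace {V : Type} [AddCommGroup V] [Module ℝ V]
    [FiniteDimensional ℝ V] {τ F : Set V} (hτF : IsCodimOneFace τ F) {m : V} (hmF : m ∈ F)
    (hmτ : m ∉ Submodule.span ℝ τ) :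
    Submodule.span ℝ (insert m τ) = Submodule.span ℝ F := by
  have hlt : Submodule.span ℝ τ < Submodule.span ℝ (insert m τ) :=
    (Submodule.span_mono (Set.subset_insert m τ)).lt_of_not_ge fun h =>
      hmτ (h (Submodule.subset_span (Set.mem_insert m τ)))
  refine Submodule.eq_of_le_of_finrank_le
    (Submodule.span_mono (Set.insert_subset hmF hτF.1.1)) ?_
  have hrank := Submodule.finrank_lt_finrank_of_lt hlt
  have hdim : coneDim τ + 1 = coneDim F := hτF.2
  unfold coneDim at hdim
  omega

section SpanInterior

variable {V : Type} [NormedAddCommGroup V] [NormedSpace ℝ V]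

/-- For a cone `s`, whose affine and linear spans agree, this is the relative interior. -/
def IsSpanInteriorPoint (s : Set V) (x : V) : Prop :=
  ∃ ε > 0, ∀ w ∈ Submodule.span ℝ s, ‖w‖ < ε → x + w ∈ s

namespace IsSpanInteriorPoint

variable {s t : Set V} {x : V}

lemma mem (hx : IsSpanInteriorPoint s x) : x ∈ s := by
  obtain ⟨ε, hε, h⟩ := hx
  simpa using h 0 (zero_mem _) (by simpa using hε)

lemma mono (hx : IsSpanInteriorPoint s x) (hst : s ⊆ t)
    (hspan : Submodule.span ℝ t ≤ Submodule.span ℝ s) : IsSpanInteriorPoint t x := by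
  obtain ⟨ε, hε, h⟩ := hx
  exact ⟨ε, hε, fun w hw hwε => hst (h w (hspan hw) hwε)⟩

lemma mem_intrinsicInterior (hx : IsSpanInteriorPoint s x) : x ∈ intrinsicInterior ℝ s := by
  have hxs := hx.mem
  obtain ⟨ε, hε, h⟩ := hx
  refine ⟨⟨x, subset_affineSpan ℝ s hxs⟩, ?_, rfl⟩
  refine interior_maximal ?_
    ((Metric.isOpen_ball (x := x) (ε := ε)).preimage continuous_subtype_val) (by simpa using hε)
  intro u hu
  have hdir : vectorSpan ℝ s ≤ Submodule.span ℝ s := by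
    rw [vectorSpan_def, Submodule.span_le]
    rintro _ ⟨a, ha, b, hb, rfl⟩
    exact sub_mem (Submodule.subset_span ha) (Submodule.subset_span hb)
  have hux : (u : V) - x ∈ Submodule.span ℝ s := by
    refine hdir ?_
    rw [← direction_affineSpan]
    exact AffineSubspace.vsub_mem_direction u.2 (subset_affineSpan ℝ s hxs)
  simpa using h _ hux (by simpa [dist_eq_norm] using hu)

lemma exists_add_nsmul {C : PointedCone ℝ V} {z : V} (hz : IsSpanInteriorPoint C z) {m : V}
    (hm : m ∈ Submodule.span ℝ (C : Set V)) : ∃ N : ℕ, IsSpanInteriorPoint C (m + N • z) := by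
  obtain ⟨ε, hε, h⟩ := hz
  obtain ⟨N, hN⟩ := exists_nat_gt ((‖m‖ + ε) / ε)
  have hNpos : (0 : ℝ) < N := lt_trans (by positivity) hN
  refine ⟨N, ε, hε, fun w hw hwε => ?_⟩
  have hsmall : ‖(N : ℝ)⁻¹ • (m + w)‖ < ε := by
    rw [norm_smul, norm_inv, Real.norm_natCast, inv_mul_lt_iff₀ hNpos]
    rw [div_lt_iff₀ hε] at hN
    nlinarith [norm_add_le m w]
  have hin := h _ (Submodule.smul_mem _ _ (add_mem hm hw)) hsmall
  have heq : m + N • z + w = (N : ℝ) • (z + (N : ℝ)⁻¹ • (m + w)) := by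
    rw [smul_add, smul_smul, mul_inv_cancel₀ hNpos.ne', one_smul, Nat.cast_smul_eq_nsmul]
    abel
  rw [heq]
  exact C.smul_mem hNpos.le hin

end IsSpanInteriorPoint

/-- By the open mapping theorem every small `w` in the span is `∑ cᵥ • v` with `|cᵥ| < 1`, so
`∑ v + w = ∑ (1 + cᵥ) • v` stays in the cone. -/
lemma isSpanInteriorPoint_sum_hull (t : Finset V) :
    IsSpanInteriorPoint (PointedCone.hull ℝ (t : Set V) : Set V) (∑ v ∈ t, v) := by
  let φ := Fintype.linearCombination ℝ (fun v : t => (v : V))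
  have hφ : ∀ c, φ c ∈ Submodule.span ℝ (t : Set V) := fun c => by
    simpa [φ, Fintype.range_linearCombination] using LinearMap.mem_range_self φ c
  let ψ := φ.codRestrict _ hφ
  have hψ : Function.Surjective ψ := by
    rintro ⟨w, hw⟩
    rw [← Subtype.range_coe (s := (t : Set V)), ← Fintype.range_linearCombination] at hw
    obtain ⟨c, rfl⟩ := hw
    exact ⟨c, rfl⟩
  obtain ⟨ε, hε, hball⟩ := Metric.isOpen_iff.mp
    (LinearMap.isOpenMap_of_finiteDimensional ψ hψ _ Metric.isOpen_ball) 0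
    ⟨0, Metric.mem_ball_self one_pos, map_zero ψ⟩
  refine ⟨ε, hε, fun w hw hwε => ?_⟩
  rw [Submodule.span_span_of_tower] at hw
  obtain ⟨c, hc, hcw⟩ := hball (show (⟨w, hw⟩ : Submodule.span ℝ (t : Set V)) ∈
    Metric.ball 0 ε by simpa using hwε)
  have hw' : w = ∑ v : t, c v • (v : V) := by
    rw [← Fintype.linearCombination_apply]
    exact (congrArg Subtype.val hcw).symm
  have hsum : ∑ v ∈ t, v + w = ∑ v : t, (1 + c v) • (v : V) := by
    rw [hw', ← Finset.sum_coe_sort t, ← Finset.sum_add_distrib]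
    simp only [add_smul, one_smul]
  rw [hsum]
  refine Submodule.sum_mem _ fun v _ => PointedCone.smul_mem _ ?_ (PointedCone.subset_hull v.2)
  have : |c v| < 1 := lt_of_le_of_lt (by simpa using norm_le_pi_norm c v) (by simpa using hc)
  linarith [neg_abs_le (c v)]

end SpanInterior

lemma latticeOf_mono {V : Type} [AddCommGroup V] {A B : Set V} (h : A ⊆ B) :
    latticeOf A ⊆ latticeOf B := by
  rintro _ ⟨a, ha, b, hb, rfl⟩
  exact ⟨a, h ha, b, h hb, rfl⟩

lemma mem_latticeOf_of_mem {V : Type} [AddCommGroup V] {A : Set V} (h0 : (0 : V) ∈ A) {a : V}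
    (ha : a ∈ A) : a ∈ latticeOf A :=
  ⟨a, ha, 0, h0, (sub_zero a).symm⟩

namespace MonoidalComplex

variable {V : Type} [NormedAddCommGroup V] [NormedSpace ℝ V] {M : AddSubgroup V}
  (𝓜 : MonoidalComplex V M) {σ τ F : Set V}

lemma coe_hull_sg (hσ : σ ∈ 𝓜.cones) : (PointedCone.hull ℝ (𝓜.sg σ) : Set V) = σ := by
  rw [← coneOf_eq_hull, 𝓜.sg_gen σ hσ]

lemma isFaceOf_self (hσ : σ ∈ 𝓜.cones) : IsFaceOf σ σ :=
  𝓜.coe_hull_sg hσ ▸ isFaceOf_pointedCone_self _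

lemma sg_subset_cone (hσ : σ ∈ 𝓜.cones) : 𝓜.sg σ ⊆ σ := fun _ hx => (𝓜.sg_sub σ hσ hx).2

lemma sg_eq_of_subset (hτ : τ ∈ 𝓜.cones) (hσ : σ ∈ 𝓜.cones) (h : τ ⊆ σ) :
    𝓜.sg τ = 𝓜.sg σ ∩ τ := by
  refine 𝓜.sg_face σ hσ τ ?_
  simpa [Set.inter_eq_right.mpr h] using 𝓜.inter_face σ hσ τ hτ

lemma sg_mono (hτ : τ ∈ 𝓜.cones) (hσ : σ ∈ 𝓜.cones) (h : τ ⊆ σ) : 𝓜.sg τ ⊆ 𝓜.sg σ := by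
  rw [𝓜.sg_eq_of_subset hτ hσ h]
  exact Set.inter_subset_left

lemma nsmul_mem_sg (hσ : σ ∈ 𝓜.cones) {x : V} (hx : x ∈ 𝓜.sg σ) (N : ℕ) : N • x ∈ 𝓜.sg σ := by
  induction N with
  | zero => simpa using 𝓜.sg_zero σ hσ
  | succ n ih => rw [succ_nsmul]; exact 𝓜.sg_add σ hσ _ ih _ hx

lemma finset_sum_mem_sg (hσ : σ ∈ 𝓜.cones) {t : Finset V} (ht : (t : Set V) ⊆ 𝓜.sg σ) :
    ∑ v ∈ t, v ∈ 𝓜.sg σ :=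
  Finset.sum_induction _ (· ∈ 𝓜.sg σ) (fun a b ha hb => 𝓜.sg_add σ hσ a ha b hb)
    (𝓜.sg_zero σ hσ) fun _ hv => ht hv

lemma add_mem_latticeOf_sg (hσ : σ ∈ 𝓜.cones) {m s : V} (hm : m ∈ latticeOf (𝓜.sg σ))
    (hs : s ∈ 𝓜.sg σ) : m + s ∈ latticeOf (𝓜.sg σ) := by
  obtain ⟨p, hp, q, hq, rfl⟩ := hm
  exact ⟨p + s, 𝓜.sg_add σ hσ p hp s hs, q, hq, by abel⟩

lemma coe_hull_eq_of_fg (hσ : σ ∈ 𝓜.cones) {t : Finset V} (ht : (t : Set V) ⊆ 𝓜.sg σ)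
    (hgen : 𝓜.sg σ ⊆ AddSubmonoid.closure (t : Set V)) :
    (PointedCone.hull ℝ (t : Set V) : Set V) = σ := by
  rw [← 𝓜.coe_hull_sg hσ, SetLike.coe_set_eq]
  refine le_antisymm (Submodule.span_mono ht) (Submodule.span_le.mpr fun x hx => ?_)
  exact AddSubmonoid.closure_le.mpr (PointedCone.subset_hull (R := ℝ)) (hgen hx)

lemma exists_isFacet_superset (hσ : σ ∈ 𝓜.cones) : ∃ F, 𝓜.IsFacet F ∧ σ ⊆ F := by
  obtain ⟨F, hF, hmax⟩ := Set.Finite.exists_maximalFor id {ρ | ρ ∈ 𝓜.cones ∧ σ ⊆ ρ}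
    (𝓜.cones_finite.subset fun _ hρ => hρ.1) ⟨σ, hσ, subset_rfl⟩
  exact ⟨F, ⟨hF.1, fun ρ hρ hFρ => (hmax ⟨hρ, hF.2.trans hFρ⟩ hFρ).antisymm hFρ⟩, hF.2⟩

lemma sInter_mem_cones {s : Set (Set V)} (hfin : s.Finite) (hs : s ⊆ 𝓜.cones)
    (hne : s.Nonempty) : ⋂₀ s ∈ 𝓜.cones := by
  induction s, hfin using Set.Finite.induction_on with
  | empty => exact absurd hne Set.not_nonempty_empty
  | @insert a s _ _ ih =>
    have ha : a ∈ 𝓜.cones := hs (Set.mem_insert a s)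
    rcases s.eq_empty_or_nonempty with rfl | hsne
    · simpa using ha
    · rw [Set.sInter_insert]
      exact 𝓜.face_mem a ha _ (𝓜.inter_face a ha _
        (ih ((Set.subset_insert a s).trans hs) hsne))

lemma setOf_mem_sg_and_mem_eq {ρ : Set V} (hρ : ρ ∈ 𝓜.cones) :
    {m : V | (∃ σ ∈ 𝓜.cones, m ∈ 𝓜.sg σ) ∧ m ∈ ρ} = 𝓜.sg ρ := by
  ext m
  refine ⟨fun ⟨⟨σ, hσ, hmσ⟩, hmρ⟩ => ?_, fun hm => ⟨⟨ρ, hρ, hm⟩, 𝓜.sg_subset_cone hρ hm⟩⟩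
  have hface := 𝓜.inter_face σ hσ ρ hρ
  have hm' : m ∈ 𝓜.sg (σ ∩ ρ) := by
    rw [𝓜.sg_face σ hσ _ hface]
    exact ⟨hmσ, 𝓜.sg_subset_cone hσ hmσ, hmρ⟩
  exact 𝓜.sg_mono (𝓜.face_mem σ hσ _ hface) hρ Set.inter_subset_right hm'

/-- The combinatorial form of seminormality of `k[ℳ]`. -/
def IsSeminormal : Prop :=
  ∀ σ ∈ 𝓜.cones, ∀ m : V, m ∈ 𝓜.sg σ ↔ ∃ τ : Set V, IsFaceOf τ σ ∧
    m ∈ latticeOf (𝓜.sg τ) ∩ intrinsicInterior ℝ τ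

variable {𝓜}

lemma IsSeminormal.exists_add_mem_sg_of_mem_span (hsn : 𝓜.IsSeminormal) (hF : F ∈ 𝓜.cones)
    (hτ : τ ∈ 𝓜.cones) (hτF : IsFaceOf τ F)
    (hnorm : latticeOf (𝓜.sg F) ∩ τ ⊆ latticeOf (𝓜.sg τ)) {z : V} (hz : z ∈ 𝓜.sg τ)
    (hzint : IsSpanInteriorPoint τ z) {m : V} (hm : m ∈ latticeOf (𝓜.sg F))
    (hmτ : m ∈ Submodule.span ℝ τ) : ∃ t ∈ 𝓜.sg τ, m + t ∈ 𝓜.sg F := by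
  rw [← 𝓜.coe_hull_sg hτ] at hzint hmτ
  obtain ⟨N, hN⟩ := hzint.exists_add_nsmul hmτ
  rw [𝓜.coe_hull_sg hτ] at hN
  have hNz : N • z ∈ 𝓜.sg τ := 𝓜.nsmul_mem_sg hτ hz N
  have hlat : m + N • z ∈ latticeOf (𝓜.sg F) :=
    𝓜.add_mem_latticeOf_sg hF hm (𝓜.sg_mono hτ hF hτF.1 hNz)
  exact ⟨N • z, hNz, (hsn F hF _).mpr
    ⟨τ, hτF, hnorm ⟨hlat, hN.mem⟩, hN.mem_intrinsicInterior⟩⟩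

/-- `m` and `τ` together span `F`, so `m` plus a relative-interior point of `τ` is a
relative-interior point of `F`. -/
lemma IsSeminormal.add_sum_mem_sg_of_notMem_span [FiniteDimensional ℝ V]
    (hsn : 𝓜.IsSeminormal) (hF : F ∈ 𝓜.cones) (hτ : τ ∈ 𝓜.cones) (hτF : IsCodimOneFace τ F)
    {t : Finset V} (ht : (t : Set V) ⊆ 𝓜.sg τ)
    (hhull : (PointedCone.hull ℝ (t : Set V) : Set V) = τ) {m : V}
    (hm : m ∈ latticeOf (𝓜.sg F)) (hmF : m ∈ F) (hmτ : m ∉ Submodule.span ℝ τ) :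
    m + ∑ v ∈ t, v ∈ 𝓜.sg F := by
  classical
  have hspan : Submodule.span ℝ (t : Set V) = Submodule.span ℝ τ := by
    rw [← hhull, Submodule.span_span_of_tower]
  have htτ : (t : Set V) ⊆ τ := hhull ▸ PointedCone.subset_hull
  have hmt : m ∉ t := fun h => hmτ (Submodule.subset_span (htτ h))
  have hint : IsSpanInteriorPoint F (m + ∑ v ∈ t, v) := by
    rw [← show ∑ v ∈ insert m t, v = m + ∑ v ∈ t, v from Finset.sum_insert hmt]
    refine (isSpanInteriorPoint_sum_hull (insert m t)).mono ?_ ?_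
    · rw [← 𝓜.coe_hull_sg hF, SetLike.coe_subset_coe, Submodule.span_le, 𝓜.coe_hull_sg hF,
        Finset.coe_insert]
      exact Set.insert_subset hmF (htτ.trans hτF.1.1)
    · rw [Submodule.span_span_of_tower, Finset.coe_insert, Submodule.span_insert, hspan,
        ← Submodule.span_insert, span_insert_eq_of_isCodimOneFace hτF hmF hmτ]
  have hsum : ∑ v ∈ t, v ∈ 𝓜.sg F := 𝓜.sg_mono hτ hF hτF.1.1 (𝓜.finset_sum_mem_sg hτ ht)
  exact (hsn F hF _).mpr ⟨F, 𝓜.isFaceOf_self hF, 𝓜.add_mem_latticeOf_sg hF hm hsum,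
    hint.mem_intrinsicInterior⟩

lemma IsSeminormal.exists_add_mem_sg_of_isCodimOneFace [FiniteDimensional ℝ V]
    (hsn : 𝓜.IsSeminormal) (hF : F ∈ 𝓜.cones) (hτ : τ ∈ 𝓜.cones) (hτF : IsCodimOneFace τ F)
    (hnorm : latticeOf (𝓜.sg F) ∩ τ ⊆ latticeOf (𝓜.sg τ)) {m : V}
    (hm : m ∈ latticeOf (𝓜.sg F)) (hmF : m ∈ F) : ∃ t ∈ 𝓜.sg τ, m + t ∈ 𝓜.sg F := by
  obtain ⟨t, ht, hgen⟩ := 𝓜.sg_fg τ hτ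
  have hhull := 𝓜.coe_hull_eq_of_fg hτ ht hgen
  have hsum := 𝓜.finset_sum_mem_sg hτ ht
  by_cases hmτ : m ∈ Submodule.span ℝ τ
  · exact hsn.exists_add_mem_sg_of_mem_span hF hτ hτF.1 hnorm hsum
      (hhull ▸ isSpanInteriorPoint_sum_hull t) hm hmτ
  · exact ⟨_, hsum, hsn.add_sum_mem_sg_of_notMem_span hF hτ hτF ht hhull hm hmF hmτ⟩

lemma IsSeminormal.exists_add_mem_sg_of_not_nonNormalCone [FiniteDimensional ℝ V]
    (hsn : 𝓜.IsSeminormal) (hτ : 𝓜.IsCodimOneCone τ) (hnn : ¬ 𝓜.NonNormalCone τ)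
    (hF : 𝓜.IsFacet F) (hτF : τ ⊆ F) {m : V} (hm : m ∈ latticeOf (𝓜.sg F)) (hmF : m ∈ F) :
    ∃ t ∈ 𝓜.sg τ, m + t ∈ 𝓜.sg F := by
  obtain ⟨hτc, F', hF', hτF'⟩ := hτ
  obtain rfl : F = F' := by
    by_contra hne
    exact hnn ⟨hτc, Or.inl ⟨F', F, hF', hF, Ne.symm hne, hτF'.1.1, hτF⟩⟩
  have h0 : (0 : V) ∈ latticeOf (𝓜.sg F) ∩ τ :=
    ⟨mem_latticeOf_of_mem (𝓜.sg_zero F hF.1) (𝓜.sg_zero F hF.1),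
      𝓜.sg_subset_cone hτc (𝓜.sg_zero τ hτc)⟩
  have hsub : latticeOf (𝓜.sg τ) ⊆ latticeOf (latticeOf (𝓜.sg F) ∩ τ) :=
    latticeOf_mono fun y hy => ⟨mem_latticeOf_of_mem (𝓜.sg_zero F hF.1)
      (𝓜.sg_mono hτc hF.1 hτF hy), 𝓜.sg_subset_cone hτc hy⟩
  have heq : latticeOf (𝓜.sg τ) = latticeOf (latticeOf (𝓜.sg F) ∩ τ) := by
    by_contra hne
    exact hnn ⟨hτc, Or.inr ⟨F, hF, hτF, hsub.ssubset_of_ne hne⟩⟩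
  refine hsn.exists_add_mem_sg_of_isCodimOneFace hF.1 hτc hτF' (fun x hx => ?_) hm hmF
  rw [heq]
  exact mem_latticeOf_of_mem h0 hx

variable {k : Type} [Field k]

/-- `S_2` applied to the family `χ^m` on every facet. -/
lemma IsS2.mem_sg_of_forall (hS2 : 𝓜.IsS2 k) {m : V}
    (hlat : ∀ G, 𝓜.IsFacet G → m ∈ latticeOf (𝓜.sg G))
    (hcod : ∀ τ, 𝓜.IsCodimOneCone τ → ∀ G, 𝓜.IsFacet G → τ ⊆ G → ∃ t ∈ 𝓜.sg τ, m + t ∈ 𝓜.sg G)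
    {F : Set V} (hF : 𝓜.IsFacet F) : m ∈ 𝓜.sg F := by
  classical
  obtain ⟨g, -, hg⟩ := hS2 (fun _ => Finsupp.single m 1)
    (fun G hG m' hm' => by
      rw [(Finsupp.single_apply_ne_zero.mp hm').1]
      exact hlat G hG)
    (fun τ hτ G hG hτG m' hm' => by
      rw [(Finsupp.single_apply_ne_zero.mp hm').1]
      obtain ⟨t, ht, hmt⟩ := hcod τ hτ G hG hτG
      exact ⟨m + t, hmt, t, ht, (add_sub_cancel_right m t).symm⟩)
    (fun _ _ _ _ _ _ _ _ _ _ => rfl)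
  by_contra hmF
  simpa using (hg F hF m).2 hmF

/-- `S_2` forces connectedness in codimension one: otherwise the function equal to `1` on `F₀`
and to `0` on the other facets would glue to a global function. -/
lemma IsS2.exists_nonNormalCone_subset (hS2 : 𝓜.IsS2 k) {F₀ F₁ : Set V}
    (hF₀ : 𝓜.IsFacet F₀) (hF₁ : 𝓜.IsFacet F₁) (hne : F₁ ≠ F₀) :
    ∃ τ, 𝓜.IsCodimOneCone τ ∧ 𝓜.NonNormalCone τ ∧ τ ⊆ F₀ := by
  classical
  by_contra! hcon
  have hshared : ∀ τ, 𝓜.IsCodimOneCone τ → ∀ G, 𝓜.IsFacet G → G ≠ F₀ → τ ⊆ F₀ → ¬ τ ⊆ G :=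
    fun τ hτ G hG hGF₀ hτF₀ hτG =>
      hcon τ hτ ⟨hτ.1, Or.inl ⟨F₀, G, hF₀, hG, hGF₀.symm, hτF₀, hτG⟩⟩ hτF₀
  let f : Set V → (V →₀ k) := fun G => if G = F₀ then Finsupp.single 0 1 else 0
  have hf : ∀ G m, f G m ≠ 0 → m = 0 := fun G m hm => by
    by_cases hG : G = F₀
    · simp only [f, hG, if_true] at hm
      exact (Finsupp.single_apply_ne_zero.mp hm).1
    · simp [f, hG] at hm
  obtain ⟨g, -, hg⟩ := hS2 f
    (fun G hG m hm => ⟨0, 𝓜.sg_zero G hG.1, 0, 𝓜.sg_zero G hG.1, by simp [hf G m hm]⟩)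
    (fun τ hτ G hG _ m hm => ⟨0, 𝓜.sg_zero G hG.1, 0, 𝓜.sg_zero τ hτ.1, by simp [hf G m hm]⟩)
    (fun τ hτ G G' hG hG' hτG hτG' _ _ => by
      by_cases hG₀ : G = F₀ <;> by_cases hG'₀ : G' = F₀
      · rw [hG₀, hG'₀]
      · exact absurd hτG' (hshared τ hτ G' hG' hG'₀ (hG₀ ▸ hτG))
      · exact absurd hτG (hshared τ hτ G hG hG₀ (hG'₀ ▸ hτG'))
      · simp [f, hG₀, hG'₀])
  have h₀ := (hg F₀ hF₀ 0).1 (𝓜.sg_zero F₀ hF₀.1)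
  have h₁ := (hg F₁ hF₁ 0).1 (𝓜.sg_zero F₁ hF₁.1)
  simp only [f, if_pos rfl, if_neg hne, Finsupp.single_eq_same, Finsupp.coe_zero,
    Pi.zero_apply] at h₀ h₁
  exact one_ne_zero (h₀.trans h₁.symm)

lemma IsS2.mem_sg_of_forall_nonNormalCone [FiniteDimensional ℝ V] (hS2 : 𝓜.IsS2 k)
    (hsn : 𝓜.IsSeminormal) {m : V}
    (hm : ∀ G, 𝓜.IsFacet G → m ∈ latticeOf (𝓜.sg G) ∧ m ∈ G)
    (hcod : ∀ τ, 𝓜.IsCodimOneCone τ → 𝓜.NonNormalCone τ → ∀ G, 𝓜.IsFacet G → τ ⊆ G →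
      ∃ t ∈ 𝓜.sg τ, m + t ∈ 𝓜.sg G)
    {F : Set V} (hF : 𝓜.IsFacet F) : m ∈ 𝓜.sg F := by
  refine hS2.mem_sg_of_forall (fun G hG => (hm G hG).1) (fun τ hτ G hG hτG => ?_) hF
  by_cases hnn : 𝓜.NonNormalCone τ
  · exact hcod τ hτ hnn G hG hτG
  · exact hsn.exists_add_mem_sg_of_not_nonNormalCone hτ hnn hG hτG (hm G hG).1 (hm G hG).2

lemma IsS2.exists_nonNormalCone [FiniteDimensional ℝ V] (hS2 : 𝓜.IsS2 k)
    (hsn : 𝓜.IsSeminormal) (hnotnormal : ∃ σ, 𝓜.NonNormalCone σ) :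
    ∃ τ, 𝓜.IsCodimOneCone τ ∧ 𝓜.NonNormalCone τ := by
  obtain ⟨σ, hσ, ⟨F, F', hF, hF', hne, hσF, -⟩ | ⟨F, hF, hσF, hlt⟩⟩ := hnotnormal
  · obtain ⟨τ, hτ, hnn, -⟩ := hS2.exists_nonNormalCone_subset hF hF' hne.symm
    exact ⟨τ, hτ, hnn⟩
  by_contra! hT
  have hunique : ∀ G, 𝓜.IsFacet G → G = F := fun G hG => by
    by_contra hne
    obtain ⟨τ, hτ, hnn, -⟩ := hS2.exists_nonNormalCone_subset hF hG hne
    exact hT τ hτ hnn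
  have hsg : latticeOf (𝓜.sg F) ∩ σ ⊆ 𝓜.sg σ := fun a ⟨ha, haσ⟩ => by
    rw [𝓜.sg_eq_of_subset hσ hF.1 hσF]
    refine ⟨hS2.mem_sg_of_forall_nonNormalCone hsn (fun G hG => ?_)
      (fun τ hτ hnn => absurd hnn (hT τ hτ)) hF, haσ⟩
    rw [hunique G hG]
    exact ⟨ha, hσF haσ⟩
  exact hlt.2 (latticeOf_mono hsg)

lemma IsS2.latticeOf_sg_inter_subset_sg [FiniteDimensional ℝ V] (hS2 : 𝓜.IsS2 k)
    (hsn : 𝓜.IsSeminormal) {ρ : Set V} (hρ : ρ ∈ 𝓜.cones)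
    (hfacet : ∀ G, 𝓜.IsFacet G → ρ ⊆ G)
    (hT : ∀ τ, 𝓜.IsCodimOneCone τ → 𝓜.NonNormalCone τ → ρ ⊆ τ) :
    latticeOf (𝓜.sg ρ) ∩ ρ ⊆ 𝓜.sg ρ := by
  rintro _ ⟨⟨a, ha, b, hb, rfl⟩, hmρ⟩
  obtain ⟨F, hF, hρF⟩ := 𝓜.exists_isFacet_superset hρ
  rw [𝓜.sg_eq_of_subset hρ hF.1 hρF]
  refine ⟨hS2.mem_sg_of_forall_nonNormalCone hsn (fun G hG => ⟨?_, hfacet G hG hmρ⟩)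
    (fun τ hτ hnn G hG _ => ⟨b, 𝓜.sg_mono hρ hτ.1 (hT τ hτ hnn) hb, ?_⟩) hF, hmρ⟩
  · exact latticeOf_mono (𝓜.sg_mono hρ hG.1 (hfacet G hG)) ⟨a, ha, b, hb, rfl⟩
  · rw [sub_add_cancel]
    exact 𝓜.sg_mono hρ hG.1 (hfacet G hG) ha

end MonoidalComplex

theorem stmt_10_general {V : Type} [NormedAddCommGroup V] [NormedSpace ℝ V] [FiniteDimensional ℝ V]
    {M : AddSubgroup V} (k : Type) [Field k]
    (𝓜 : MonoidalComplex V M)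
    (hsn : ∀ σ ∈ 𝓜.cones, ∀ m : V, m ∈ 𝓜.sg σ ↔ ∃ τ : Set V, IsFaceOf τ σ ∧
      m ∈ latticeOf (𝓜.sg τ) ∩ intrinsicInterior ℝ τ)
    (hS2 : 𝓜.IsS2 k)
    (hnotnormal : ∃ σ, 𝓜.NonNormalCone σ)
    (σΔ : Set V)
    (hσΔ : σΔ = ⋂₀ {τ : Set V | 𝓜.IsCodimOneCone τ ∧ 𝓜.NonNormalCone τ})
    (SσΔ : Set V)
    (hSσΔ : SσΔ = {m : V | (∃ σ ∈ 𝓜.cones, m ∈ 𝓜.sg σ) ∧ m ∈ σΔ}) :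
    σΔ ∈ 𝓜.cones ∧ SσΔ = latticeOf SσΔ ∩ σΔ := by
  set T := {τ : Set V | 𝓜.IsCodimOneCone τ ∧ 𝓜.NonNormalCone τ}
  have hTcones : T ⊆ 𝓜.cones := fun τ hτ => hτ.1.1
  have hT : ∀ τ ∈ T, σΔ ⊆ τ := fun τ hτ => hσΔ ▸ Set.sInter_subset_of_mem hτ
  obtain ⟨τ₀, hτ₀⟩ := hS2.exists_nonNormalCone hsn hnotnormal
  have hσΔc : σΔ ∈ 𝓜.cones :=
    hσΔ ▸ 𝓜.sInter_mem_cones (𝓜.cones_finite.subset hTcones) hTcones ⟨τ₀, hτ₀⟩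
  have hfacet : ∀ G, 𝓜.IsFacet G → σΔ ⊆ G := fun G hG => by
    obtain ⟨G₀, hG₀, hτ₀G₀⟩ := hτ₀.1.2
    by_cases hG₀G : G₀ = G
    · exact (hT τ₀ hτ₀).trans (hG₀G ▸ hτ₀G₀.1.1)
    · obtain ⟨τ, hτ, hnn, hτG⟩ := hS2.exists_nonNormalCone_subset hG hG₀ hG₀G
      exact (hT τ ⟨hτ, hnn⟩).trans hτG
  rw [hSσΔ, 𝓜.setOf_mem_sg_and_mem_eq hσΔc]
  refine ⟨hσΔc, subset_antisymm (fun m hm => ⟨mem_latticeOf_of_mem (𝓜.sg_zero σΔ hσΔc) hm,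
    𝓜.sg_subset_cone hσΔc hm⟩) ?_⟩
  exact hS2.latticeOf_sg_inter_subset_sg hsn hσΔc hfacet fun τ hτ hnn => hT τ ⟨hτ, hnn⟩

/-- Let `X = Spec k[ℳ]` be seminormal and `S_2` and not normal, with
non-normal locus `C`. Then the core of `X` (the intersection of the irreducible components of
`C`) is a normal toric variety: combinatorially, for
`σ(Δ) = ⋂_{X_{τ_i} ⊆ C} τ_i` (intersection over codimension-one cones `τ_i` of `Δ` whose
subvarieties lie in `C`), one has `σ(Δ) ∈ Δ` and `S_{σ(Δ)} = Λ ∩ σ(Δ)`, where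
`Λ = S_{σ(Δ)} - S_{σ(Δ)}`. -/
theorem stmt_10 {V : Type} [NormedAddCommGroup V] [NormedSpace ℝ V] [FiniteDimensional ℝ V]
    {M : AddSubgroup V} (hM : IsLattice M) (k : Type) [Field k]
    (𝓜 : MonoidalComplex V M)
    (hsn : ∀ σ ∈ 𝓜.cones, ∀ m : V, m ∈ 𝓜.sg σ ↔ ∃ τ : Set V, IsFaceOf τ σ ∧
      m ∈ latticeOf (𝓜.sg τ) ∩ intrinsicInterior ℝ τ)
    (hS2 : 𝓜.IsS2 k)
    (hnotnormal : ∃ σ, 𝓜.NonNormalCone σ)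
    (σΔ : Set V)
    (hσΔ : σΔ = ⋂₀ {τ : Set V | 𝓜.IsCodimOneCone τ ∧ 𝓜.NonNormalCone τ})
    (SσΔ : Set V)
    (hSσΔ : SσΔ = {m : V | (∃ σ ∈ 𝓜.cones, m ∈ 𝓜.sg σ) ∧ m ∈ σΔ}) :
    σΔ ∈ 𝓜.cones ∧ SσΔ = latticeOf SσΔ ∩ σΔ :=
  stmt_10_general k 𝓜 hsn hS2 hnotnormal σΔ hσΔ SσΔ hSσΔ
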